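/- arXiv:2409.08724 — 2 statements merged into one kernel-verified Lean document; each statement's English description precedes it below -/
import Mathlib

section
/- If ε ≤ (1/γ - 1)(Q*(z) - Q^π(z)) for z ∈ {(x¹,x²), (x²,x³)} and (1/γ - 1)(Q*(x¹,x³) - Q^π(x¹,x³)) ≤ 2ε, and Q* satisfies the triangle inequality at (x¹,x²,x³), then Q^π(x¹,x²) + Q^π(x²,x³) ≤ Q^π(x¹,x³). -/
/-- pointwise version of Proposition 2. -/
theorem on_policy_triangle_pointwise
    {X : Type*} (γ ε : ℝ) (hγ : γ ∈ Set.Ioo (0:ℝ) 1) (hε : 0 < ε)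
    (Qstar Qpi : X × X → ℝ) (x₁ x₂ x₃ : X)
    (h12 : ε ≤ (1/γ - 1) * (Qstar (x₁, x₂) - Qpi (x₁, x₂)))
    (h23 : ε ≤ (1/γ - 1) * (Qstar (x₂, x₃) - Qpi (x₂, x₃)))
    (h13 : (1/γ - 1) * (Qstar (x₁, x₃) - Qpi (x₁, x₃)) ≤ 2 * ε)
    (htri : Qstar (x₁, x₂) + Qstar (x₂, x₃) ≤ Qstar (x₁, x₃)) :
    Qpi (x₁, x₂) + Qpi (x₂, x₃) ≤ Qpi (x₁, x₃) := by
  obtain ⟨h0, h1⟩ := hγ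
  have hc : 0 < 1/γ - 1 := by
    have : 1 < 1/γ := (one_lt_one_div h0 h1)
    linarith
  nlinarith [mul_le_mul_of_nonneg_left htri hc.le]
end

section
/- For a deterministic discounted transition system with sparse reward (0 at goal, -1 otherwise), the function c(x,y) = -Q*(x,y) where Q*(x,y) = -(1-γ^{T(x,y)})/(1-γ) and T(x,y) is the minimal number of steps from x to y (∞ if unreachable, with γ^∞ := 0), satisfies the triangle inequality: c(x,z) ≤ c(x,y) + c(y,z). -/
/-- for a deterministic sparse-reward system with minimal
hitting time `T : X → X → ℕ∞` (with `γ^∞ := 0`) that is subadditive, the cost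
`c(x,y) = -Q*(x,y) = (1 - γ^{T(x,y)})/(1-γ)` satisfies the triangle
inequality. -/
theorem sparse_cost_triangle
    {X : Type*} (γ : ℝ) (hγ : γ ∈ Set.Ioo (0:ℝ) 1)
    (T : X → X → ℕ∞)
    (hTsub : ∀ x y z : X, T x z ≤ T x y + T y z)
    (c : X → X → ℝ)
    (hc : ∀ x y : X,
      c x y = (1 - (if T x y = ⊤ then 0 else γ ^ (T x y).toNat)) / (1 - γ)) :
    ∀ x y z : X, c x z ≤ c x y + c y z := by
  obtain ⟨hγ0, hγ1⟩ := hγ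
  have h1γ : (0:ℝ) < 1 - γ := by linarith
  intro x y z
  rw [hc, hc, hc]
  have hg0 : ∀ t : ℕ∞, (0:ℝ) ≤ (if t = ⊤ then 0 else γ ^ t.toNat) := by
    intro t; split <;> positivity
  have hg1 : ∀ t : ℕ∞, (if t = ⊤ then 0 else γ ^ t.toNat) ≤ 1 := by
    intro t; split
    · norm_num
    · exact pow_le_one₀ hγ0.le hγ1.le
  rw [← add_div]
  have hnum : (if T x y = ⊤ then 0 else γ ^ (T x y).toNat) +
      (if T y z = ⊤ then 0 else γ ^ (T y z).toNat) ≤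
      1 + (if T x z = ⊤ then 0 else γ ^ (T x z).toNat) := by
    by_cases hxy : T x y = ⊤
    · simp only [hxy, if_true]
      have := hg1 (T y z); have := hg0 (T x z); linarith
    · by_cases hyz : T y z = ⊤
      · simp only [hyz, if_true]
        have := hg1 (T x y); have := hg0 (T x z); linarith
      · have hle := hTsub x y z
        have hxz : T x z ≠ ⊤ := by
          intro h
          rw [h] at hle
          exact (WithTop.add_ne_top.mpr ⟨hxy, hyz⟩) (top_le_iff.mp hle)
        simp only [hxy, hyz, hxz, if_false]
        have hk : (T x z).toNat ≤ (T x y).toNat + (T y z).toNat := by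
          have := ENat.toNat_le_toNat hle (WithTop.add_ne_top.mpr ⟨hxy, hyz⟩)
          rwa [ENat.toNat_add hxy hyz] at this
        have h1 : γ ^ ((T x y).toNat + (T y z).toNat) ≤ γ ^ (T x z).toNat :=
          pow_le_pow_of_le_one hγ0.le hγ1.le hk
        rw [pow_add] at h1
        have h2 : (0:ℝ) ≤ (1 - γ ^ (T x y).toNat) * (1 - γ ^ (T y z).toNat) := by
          have := pow_le_one₀ hγ0.le hγ1.le (n := (T x y).toNat)
          have := pow_le_one₀ hγ0.le hγ1.le (n := (T y z).toNat)
          nlinarith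
        nlinarith
  rw [div_le_div_iff₀ h1γ h1γ]; rw [mul_comm, mul_comm _ (1-γ), mul_le_mul_iff_right₀ h1γ]
  linarith
end
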